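/- arXiv:2006.10975 — 2 statements merged into one kernel-verified Lean document; each statement's English description precedes it below -/
import Mathlib

section
/- Let e ≥ 0 be an integer. Let A = ℤ[a_0,a_1,a_2,b_0,b_1,b_2, (u_α), (v_α)] be the polynomial ring over ℤ in the indeterminates a_0,a_1,a_2,b_0,b_1,b_2 together with indeterminates u_α and v_α indexed by the multi-indices α ∈ ℕ³ with α_0+α_1+α_2 = e. Set m_0 = a_1b_2 − a_2b_1, m_1 = a_2b_0 − a_0b_2, m_2 = a_0b_1 − a_1b_0 (the signed 2×2 minors of the matrix with rows (a_0,a_1,a_2) and (b_0,b_1,b_2)). Let q = Σ_{|α|=e} u_α·y_0^{α_0}y_1^{α_1}y_2^{α_2} and r = Σ_{|α|=e} v_α·y_0^{α_0}y_1^{α_1}y_2^{α_2} be the generic ternary forms of degree e, and let q(m_0,m_1,m_2) and r(m_0,m_1,m_2) denote their evaluations at y_i = m_i. Then the polynomial m_0·q(m_0,m_1,m_2) − m_1·r(m_0,m_1,m_2) is an irreducible element of A. -/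
/-- Multi-indices `α ∈ ℕ³` with `α₀ + α₁ + α₂ = e`, encoded by the pair `(α₀, α₁)`
(so that `α₂ = e - α₀ - α₁`). -/
abbrev MIdx (e : ℕ) : Type := { p : Fin (e + 1) × Fin (e + 1) // (p.1 : ℕ) + (p.2 : ℕ) ≤ e }

/-- The index set of the indeterminates of the universal ring
`A = ℤ[a₀,a₁,a₂, b₀,b₁,b₂, (u_α), (v_α)]`. -/
abbrev Idx (e : ℕ) : Type := Fin 3 ⊕ Fin 3 ⊕ MIdx e ⊕ MIdx e

/-!
Write `P = m₀ q(m) - m₁ r(m)`. The coefficient `T` of `y₀ ^ e` in `q` enters `P` only linearly: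
`P = m₀ ^ (e + 1) T + d` with `T` absent from `m₀` and `d`, and such a polynomial is irreducible as
soon as `m₀ ^ (e + 1)` and `d` are coprime. A common divisor of `m₀ ^ (e + 1)` and `d` involves
only the `a`'s and `b`'s, so it survives the specialisation sending every `u_α` to `0` and every
`v_α` to `0` except `v_(0,e,0) ↦ 1`, which turns `d` into `-m₁ ^ (e + 1)`. Finally `m₀` and `m₁`
are coprime: a common divisor avoids `a₀, b₀` (absent from `m₀`) and `a₁, b₁` (absent from `m₁`),
and specialising those variables shows that it divides both `a₂` and `b₂`.
-/

open Function

namespace MvPolynomial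

variable {R σ : Type*} [CommRing R]

theorem aeval_eq_self_of_mem_supported {s : Set σ} {g : MvPolynomial σ R}
    (hg : g ∈ supported R s) {f : σ → MvPolynomial σ R} (hf : ∀ i ∈ s, f i = X i) :
    aeval f g = g := by
  obtain ⟨g, rfl⟩ : ∃ g', rename Subtype.val g' = g := by
    rwa [supported_eq_range_rename, AlgHom.mem_range] at hg
  conv_rhs => rw [← aeval_X_left_apply (rename Subtype.val g)]
  rw [aeval_rename, aeval_rename]
  exact congrArg (aeval · g) (_root_.funext fun i : s => hf i i.2)

theorem dvd_aeval_of_mem_supported {s : Set σ} {g p : MvPolynomial σ R}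
    (hg : g ∈ supported R s) {f : σ → MvPolynomial σ R} (hf : ∀ i ∈ s, f i = X i)
    (hgp : g ∣ p) : g ∣ aeval f p :=
  aeval_eq_self_of_mem_supported hg hf ▸ map_dvd (aeval f) hgp

theorem notMem_vars_of_mem_supported {s : Set σ} {g : MvPolynomial σ R}
    (hg : g ∈ supported R s) {x : σ} (hx : x ∉ s) : x ∉ g.vars :=
  fun h => hx (mem_supported.mp hg h)

variable [IsDomain R]

theorem mem_supported_of_dvd {s : Set σ} {g p : MvPolynomial σ R} (hgp : g ∣ p) (hp : p ≠ 0)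
    (hps : p ∈ supported R s) : g ∈ supported R s := by
  obtain ⟨h, rfl⟩ := hgp
  rw [mem_supported] at hps ⊢
  refine subset_trans (fun i hi => ?_) hps
  rw [Finset.mem_coe, mem_vars_iff_degreeOf_ne_zero] at hi ⊢
  rw [degreeOf_mul_eq (left_ne_zero_of_mul hp) (right_ne_zero_of_mul hp)]
  omega

theorem isRelPrime_of_isRelPrime_aeval {s : Set σ} {c d : MvPolynomial σ R} (hc : c ≠ 0)
    (hcs : c ∈ supported R s) {f : σ → MvPolynomial σ R} (hf : ∀ i ∈ s, f i = X i)
    (h : IsRelPrime c (aeval f d)) : IsRelPrime c d :=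
  fun _ hgc hgd => h hgc (dvd_aeval_of_mem_supported (mem_supported_of_dvd hgc hc hcs) hf hgd)

theorem X_mul_X_sub_X_mul_X_ne_zero {i j k l : σ} (hi : i ≠ k) (hj : j ≠ k) :
    (X i * X j - X k * X l : MvPolynomial σ R) ≠ 0 := by
  classical
  intro h
  have := congrArg (aeval (update (X : σ → MvPolynomial σ R) k 0)) h
  simp only [map_sub, map_mul, aeval_X, update_of_ne hi, update_of_ne hj, update_self,
    zero_mul, sub_zero, map_zero] at this
  exact mul_ne_zero (X_ne_zero i) (X_ne_zero j) this

theorem isRelPrime_generic_minors {a b : Fin 3 → σ} (ha : Injective a) (hb : Injective b)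
    (hab : ∀ i j, a i ≠ b j) :
    IsRelPrime (X (a 1) * X (b 2) - X (a 2) * X (b 1) : MvPolynomial σ R)
      (X (a 2) * X (b 0) - X (a 0) * X (b 2)) := by
  classical
  intro g h₀ h₁
  have hba : ∀ i j, b i ≠ a j := fun i j h => hab j i h.symm
  have hX {s : Set σ} {i : σ} (hi : i ∈ s) : (X i : MvPolynomial σ R) ∈ supported R s :=
    X_mem_supported.mpr hi
  have hg₀ : g ∈ supported R {a 0, b 0}ᶜ := mem_supported_of_dvd h₀
    (X_mul_X_sub_X_mul_X_ne_zero (ha.ne (by decide)) (hba 2 2))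
    (sub_mem (mul_mem (hX (by simp [ha.eq_iff, hab])) (hX (by simp [hb.eq_iff, hba])))
      (mul_mem (hX (by simp [ha.eq_iff, hab])) (hX (by simp [hb.eq_iff, hba]))))
  have hg₁ : g ∈ supported R {a 1, b 1}ᶜ := mem_supported_of_dvd h₁
    (X_mul_X_sub_X_mul_X_ne_zero (ha.ne (by decide)) (hba 0 0))
    (sub_mem (mul_mem (hX (by simp [ha.eq_iff, hab])) (hX (by simp [hb.eq_iff, hba])))
      (mul_mem (hX (by simp [ha.eq_iff, hab])) (hX (by simp [hb.eq_iff, hba]))))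
  have hb₂ : g ∣ X (b 2) := by
    have := dvd_aeval_of_mem_supported hg₁
      (f := fun j => if j = a 1 then 1 else if j = b 1 then 0 else X j)
      (fun j hj => by simp_all) h₀
    simpa [ha.eq_iff, hb.eq_iff, hab, hba] using this
  have ha₂ : g ∣ X (a 2) := by
    have := dvd_aeval_of_mem_supported hg₀
      (f := fun j => if j = a 0 then 0 else if j = b 0 then 1 else X j)
      (fun j hj => by simp_all) h₁
    simpa [ha.eq_iff, hb.eq_iff, hab, hba] using this
  have := dvd_aeval_of_mem_supported (mem_supported_of_dvd hb₂ (X_ne_zero _) (hX rfl))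
    (f := update X (a 2) 1) (fun j hj => update_of_ne (hj ▸ hba 2 2) _ _) ha₂
  exact isUnit_of_dvd_one (by simpa using this)

end MvPolynomial

section TernaryForm

variable {A B : Type*} [CommSemiring A] [CommSemiring B] {e : ℕ}

/-- The form `∑_α c α • Y^α` of degree `e` in three variables, evaluated at `Y = y`. -/
def ternaryForm (c : MIdx e → A) (y : Fin 3 → A) : A :=
  ∑ p : MIdx e, c p * y 0 ^ (p.1.1 : ℕ) * y 1 ^ (p.1.2 : ℕ) * y 2 ^ (e - (p.1.1 : ℕ) - (p.1.2 : ℕ))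

theorem ternaryForm_mem {S : Type*} [SetLike S A] [SubsemiringClass S A] {s : S}
    {c : MIdx e → A} {y : Fin 3 → A} (hc : ∀ p, c p ∈ s) (hy : ∀ i, y i ∈ s) :
    ternaryForm c y ∈ s :=
  sum_mem fun p _ => mul_mem (mul_mem (mul_mem (hc p) (pow_mem (hy 0) _)) (pow_mem (hy 1) _))
    (pow_mem (hy 2) _)

theorem map_ternaryForm {F : Type*} [FunLike F A B] [RingHomClass F A B] (φ : F)
    (c : MIdx e → A) (y : Fin 3 → A) :
    φ (ternaryForm c y) = ternaryForm (fun p => φ (c p)) (fun i => φ (y i)) := by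
  simp only [ternaryForm, map_sum, map_mul, map_pow]

theorem ternaryForm_zero (y : Fin 3 → A) : ternaryForm (0 : MIdx e → A) y = 0 := by
  simp [ternaryForm]

theorem ternaryForm_single (t : MIdx e) (a : A) (y : Fin 3 → A) :
    ternaryForm (Pi.single t a) y =
      a * y 0 ^ (t.1.1 : ℕ) * y 1 ^ (t.1.2 : ℕ) * y 2 ^ (e - (t.1.1 : ℕ) - (t.1.2 : ℕ)) := by
  rw [ternaryForm, Finset.sum_eq_single t (fun p _ hp => by simp [hp]) (by simp)]
  simp

theorem ternaryForm_eq_add_update (c : MIdx e → A) (y : Fin 3 → A) (t : MIdx e) :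
    ternaryForm c y =
      c t * y 0 ^ (t.1.1 : ℕ) * y 1 ^ (t.1.2 : ℕ) * y 2 ^ (e - (t.1.1 : ℕ) - (t.1.2 : ℕ)) +
        ternaryForm (update c t 0) y := by
  rw [← ternaryForm_single]
  simp only [ternaryForm, ← Finset.sum_add_distrib, ← add_mul]
  congr! 4 with p
  by_cases hp : p = t
  · subst hp; simp
  · simp [hp]

end TernaryForm

namespace MvPolynomial

variable {R σ : Type*} [CommRing R] {e : ℕ} {s : Set σ} {y : Fin 3 → MvPolynomial σ R}

theorem aeval_ternaryForm_X_comp {f : σ → MvPolynomial σ R} (hf : ∀ i ∈ s, f i = X i)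
    (hy : ∀ i, y i ∈ supported R s) (u : MIdx e → σ) :
    aeval f (ternaryForm (X ∘ u) y) = ternaryForm (f ∘ u) y := by
  rw [map_ternaryForm]
  congr
  · exact _root_.funext fun p => aeval_X f (u p)
  · exact _root_.funext fun i => aeval_eq_self_of_mem_supported (hy i) hf

theorem exists_ternaryForm_X_comp_eq_X_mul_add [Nontrivial R] {u : MIdx e → σ}
    (hu : Injective u) (t : MIdx e) (hy : ∀ i, y i ∈ supported R {u t}ᶜ) :
    ∃ q₀ ∈ supported R {u t}ᶜ, ternaryForm (X ∘ u) y =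
      X (u t) * (y 0 ^ (t.1.1 : ℕ) * y 1 ^ (t.1.2 : ℕ) * y 2 ^ (e - (t.1.1 : ℕ) - (t.1.2 : ℕ))) +
        q₀ := by
  classical
  refine ⟨ternaryForm (update (X ∘ u) t 0) y, ternaryForm_mem (fun p => ?_) hy, ?_⟩
  · by_cases hp : p = t
    · simp [hp]
    · simpa [hp] using hu.ne hp
  · rw [ternaryForm_eq_add_update _ _ t]
    simp only [comp_apply, mul_assoc]

variable [IsDomain R] [UniqueFactorizationMonoid R]

theorem irreducible_mul_ternaryForm_sub_mul_ternaryForm (hy : ∀ i, y i ∈ supported R s)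
    (hy₀ : y 0 ≠ 0) (hy₀₁ : IsRelPrime (y 0) (y 1)) {u v : MIdx e → σ} (hu : Injective u)
    (hv : Injective v) (huv : ∀ p q, u p ≠ v q) (hus : ∀ p, u p ∉ s) (hvs : ∀ p, v p ∉ s) :
    Irreducible (y 0 * ternaryForm (X ∘ u) y - y 1 * ternaryForm (X ∘ v) y) := by
  classical
  set P := y 0 * ternaryForm (X ∘ u) y - y 1 * ternaryForm (X ∘ v) y
  let t : MIdx e := ⟨(Fin.last e, 0), by simp⟩
  have hsT : supported R s ≤ supported R {u t}ᶜ :=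
    supported_mono fun j hj => ne_of_mem_of_not_mem hj (hus t)
  obtain ⟨q₀, hq₀, hq⟩ := exists_ternaryForm_X_comp_eq_X_mul_add hu t (fun i => hsT (hy i))
  have hr : ternaryForm (X ∘ v) y ∈ supported R {u t}ᶜ :=
    ternaryForm_mem (fun p => X_mem_supported.mpr (huv t p).symm) (fun i => hsT (hy i))
  set d := y 0 * q₀ - y 1 * ternaryForm (X ∘ v) y
  have hP : P = y 0 ^ (e + 1) * X (u t) + d := by
    simp only [P, d, hq]
    simp [t]
    ring
  let s₀ : MIdx e := ⟨(0, Fin.last e), by simp⟩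
  let f : σ → MvPolynomial σ R := fun j => if j ∈ s then X j else if j = v s₀ then 1 else 0
  have hf : ∀ j ∈ s, f j = X j := fun j hj => if_pos hj
  have hfu : f ∘ u = 0 := _root_.funext fun p => by simp [f, hus, huv]
  have hfv : f ∘ v = Pi.single s₀ 1 := _root_.funext fun p => by
    simp [f, hvs, hv.eq_iff, Pi.single_apply]
  have hfP : aeval f P = -(y 1 ^ (e + 1)) := by
    simp only [P, map_sub, map_mul, aeval_ternaryForm_X_comp hf hy, hfu, hfv, ternaryForm_zero,
      ternaryForm_single, aeval_eq_self_of_mem_supported (hy _) hf]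
    simp [s₀]
    ring
  have hrel : IsRelPrime (y 0 ^ (e + 1)) P :=
    isRelPrime_of_isRelPrime_aeval (pow_ne_zero _ hy₀) (pow_mem (hy 0) _) hf
      (hfP ▸ fun _ h₀ h₁ => hy₀₁.pow h₀ (dvd_neg.mp h₁))
  rw [hP] at hrel ⊢
  exact irreducible_mul_X_add _ _ _ (pow_ne_zero _ hy₀)
    (notMem_vars_of_mem_supported (hsT (pow_mem (hy 0) _)) (by simp))
    (notMem_vars_of_mem_supported (sub_mem (mul_mem (hsT (hy 0)) hq₀) (mul_mem (hsT (hy 1)) hr))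
      (by simp))
    hrel.of_mul_add_left_right

end MvPolynomial

open MvPolynomial in
/-- For generic linear forms `p = a₀x₀+a₁x₁+a₂x₂` and `p' = b₀x₀+b₁x₁+b₂x₂` with signed
`2×2` minors `m₀ = a₁b₂ − a₂b₁`, `m₁ = a₂b₀ − a₀b₂`, `m₂ = a₀b₁ − a₁b₀`, and for generic
ternary forms `q`, `r` of degree `e`, the polynomial `m₀·q(m₀,m₁,m₂) − m₁·r(m₀,m₁,m₂)`
is irreducible in the universal coefficient ring. -/
theorem minor_combination_generic_irreducible (e : ℕ)
    (a b : Fin 3 → MvPolynomial (Idx e) ℤ)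
    (ha : a = fun i => MvPolynomial.X (Sum.inl i))
    (hb : b = fun i => MvPolynomial.X (Sum.inr (Sum.inl i)))
    (m : Fin 3 → MvPolynomial (Idx e) ℤ)
    (hm0 : m 0 = a 1 * b 2 - a 2 * b 1)
    (hm1 : m 1 = a 2 * b 0 - a 0 * b 2)
    (hm2 : m 2 = a 0 * b 1 - a 1 * b 0)
    (qval rval : MvPolynomial (Idx e) ℤ)
    (hq : qval = ∑ p : MIdx e,
      MvPolynomial.X (Sum.inr (Sum.inr (Sum.inl p))) *
        m 0 ^ (p.1.1 : ℕ) * m 1 ^ (p.1.2 : ℕ) * m 2 ^ (e - (p.1.1 : ℕ) - (p.1.2 : ℕ)))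
    (hr : rval = ∑ p : MIdx e,
      MvPolynomial.X (Sum.inr (Sum.inr (Sum.inr p))) *
        m 0 ^ (p.1.1 : ℕ) * m 1 ^ (p.1.2 : ℕ) * m 2 ^ (e - (p.1.1 : ℕ) - (p.1.2 : ℕ))) :
    Irreducible (m 0 * qval - m 1 * rval) := by
  subst ha hb hq hr
  let ab : Set (Idx e) := Set.range Sum.inl ∪ Set.range (Sum.inr ∘ Sum.inl)
  have hm : ∀ i, m i ∈ supported ℤ ab := by
    have hminor (i j k l : Fin 3) : X (Sum.inl i) * X (Sum.inr (Sum.inl j)) -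
        X (Sum.inl k) * X (Sum.inr (Sum.inl l)) ∈ supported ℤ ab :=
      sub_mem (mul_mem (X_mem_supported.mpr (.inl ⟨i, rfl⟩)) (X_mem_supported.mpr (.inr ⟨j, rfl⟩)))
        (mul_mem (X_mem_supported.mpr (.inl ⟨k, rfl⟩)) (X_mem_supported.mpr (.inr ⟨l, rfl⟩)))
    intro i
    match i with
    | 0 => rw [hm0]; exact hminor 1 2 2 1
    | 1 => rw [hm1]; exact hminor 2 0 0 2
    | 2 => rw [hm2]; exact hminor 0 1 1 0
  have hm0ne : m 0 ≠ 0 := by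
    rw [hm0]
    exact X_mul_X_sub_X_mul_X_ne_zero (by simp) (by simp)
  have hrel : IsRelPrime (m 0) (m 1) := by
    rw [hm0, hm1]
    exact isRelPrime_generic_minors (a := Sum.inl) (b := Sum.inr ∘ Sum.inl) Sum.inl_injective
      (Sum.inr_injective.comp Sum.inl_injective) fun _ _ => Sum.inl_ne_inr
  exact irreducible_mul_ternaryForm_sub_mul_ternaryForm hm hm0ne hrel
    (u := fun p => .inr (.inr (.inl p))) (v := fun p => .inr (.inr (.inr p)))
    (fun _ _ h => by simpa using h) (fun _ _ h => by simpa using h) (fun _ _ => by simp)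
    (fun _ => by simp [ab]) (fun _ => by simp [ab])
end

section
/- Let m ≥ 1 and e ≥ 0 be integers, and let R = ℤ[w_0,…,w_m, u_0,…,u_e, v_0,…,v_e] be the polynomial ring over ℤ in these indeterminates. Let P = Σ_{k=0}^{m} w_k·T^k, Q = Σ_{i=0}^{e} u_i·T^i and S = Σ_{i=0}^{e} v_i·T^i be generic polynomials of degrees m, e and e. Then the resultant Res(T·Q − S, P) ∈ R (the Sylvester determinant of the degree-(e+1) polynomial T·Q − S and the degree-m polynomial P) is a primitive polynomial over ℤ: the only integers dividing all of its coefficients are ±1 (equivalently, no prime number p ∈ ℤ divides Res(T·Q − S, P) in R). -/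
/-- The Sylvester matrix of two univariate polynomials `P` and `Q` over a commutative
ring, where `P` is regarded as a polynomial of (formal) degree `m` and `Q` as a
polynomial of (formal) degree `n`.  It is the `(m+n) × (m+n)` matrix whose first `n`
rows carry the (shifted) coefficients of `P` and whose last `m` rows carry the
(shifted) coefficients of `Q`. -/
def sylvesterMatrix {R : Type*} [CommRing R] (m n : ℕ) (P Q : Polynomial R) :
    Matrix (Fin (m + n)) (Fin (m + n)) R :=
  Matrix.of fun i j =>
    if (i : ℕ) < n then
      if (i : ℕ) ≤ (j : ℕ) then P.coeff ((j : ℕ) - (i : ℕ)) else 0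
    else
      if (i : ℕ) - n ≤ (j : ℕ) then Q.coeff ((j : ℕ) - ((i : ℕ) - n)) else 0

/-- The resultant of `P`, of formal degree `m`, and `Q`, of formal degree `n`:
the determinant of their `(m+n) × (m+n)` Sylvester matrix. -/
def res {R : Type*} [CommRing R] (m n : ℕ) (P Q : Polynomial R) : R :=
  (sylvesterMatrix m n P Q).det

/-!
Specialize the generic coefficients to `w₀ = u_e = 1` and all others to `0`. Then `T·Q − S`
becomes `T^(e+1)` and `P` becomes `1`, whose Sylvester matrix is a permutation matrix, so the
resultant specializes to `±1`. An integer dividing the resultant divides its specialization.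
-/

open Polynomial

theorem sylvesterMatrix_map {R S : Type*} [CommRing R] [CommRing S] (φ : R →+* S) (m n : ℕ)
    (P Q : R[X]) :
    (sylvesterMatrix m n P Q).map φ = sylvesterMatrix m n (P.map φ) (Q.map φ) := by
  ext i j
  simp only [sylvesterMatrix, Matrix.map_apply, Matrix.of_apply, coeff_map]
  split_ifs <;> simp

theorem res_map {R S : Type*} [CommRing R] [CommRing S] (φ : R →+* S) (m n : ℕ) (P Q : R[X]) :
    φ (res m n P Q) = res m n (P.map φ) (Q.map φ) := by
  rw [res, RingHom.map_det, RingHom.mapMatrix_apply, sylvesterMatrix_map, res]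

theorem sylvesterMatrix_X_pow_one (R : Type*) [CommRing R] (m n : ℕ) :
    sylvesterMatrix m n (X ^ m : R[X]) 1 =
      Equiv.Perm.permMatrix R ((finCongr (add_comm m n)).trans finAddFlip) := by
  ext i j
  simp only [sylvesterMatrix, Matrix.of_apply, Equiv.Perm.permMatrix,
    PEquiv.toMatrix_toPEquiv_apply, Pi.single_apply, coeff_X_pow, coeff_one, Equiv.trans_apply]
  obtain ⟨i, hi⟩ := i
  obtain ⟨j, hj⟩ := j
  by_cases hin : i < n
  · rw [finCongr_apply_mk, finAddFlip_apply_mk_left hin]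
    simp only [Fin.mk.injEq, hin, if_true]
    split_ifs <;> first | rfl | (exfalso; omega)
  · rw [finCongr_apply_mk, finAddFlip_apply_mk_right (not_lt.1 hin)]
    simp only [Fin.mk.injEq, hin, if_false]
    split_ifs <;> first | rfl | (exfalso; omega)

theorem isUnit_res_X_pow_one (R : Type*) [CommRing R] (m n : ℕ) :
    IsUnit (res m n (X ^ m : R[X]) 1) := by
  rw [res, sylvesterMatrix_X_pow_one, Matrix.det_permutation]
  exact (Equiv.Perm.sign _).isUnit.map (Int.castRingHom R)

theorem sum_C_single_mul_X_pow {R : Type*} [CommRing R] (n : ℕ) (i : Fin n) (a : R) :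
    ∑ k : Fin n, C (Pi.single i a k) * X ^ (k : ℕ) = C a * X ^ (i : ℕ) := by
  rw [Fintype.sum_eq_single i (fun k hk => by simp [hk])]
  simp

theorem MvPolynomial.isUnit_of_C_dvd_of_isUnit_eval {σ R : Type*} [CommRing R] {c : R}
    {p : MvPolynomial σ R} (f : σ → R) (hc : C c ∣ p) (hp : IsUnit (eval f p)) :
    IsUnit c := by
  obtain ⟨q, rfl⟩ := hc
  rw [map_mul, eval_C] at hp
  exact isUnit_of_mul_isUnit_left hp

theorem resultant_XQ_sub_S_primitive_general (m e : ℕ)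
    (P Q S : Polynomial (MvPolynomial (Fin (m + 1) ⊕ Fin (e + 1) ⊕ Fin (e + 1)) ℤ))
    (hP : P = ∑ k : Fin (m + 1),
      Polynomial.C (MvPolynomial.X (Sum.inl k)) * Polynomial.X ^ (k : ℕ))
    (hQ : Q = ∑ i : Fin (e + 1),
      Polynomial.C (MvPolynomial.X (Sum.inr (Sum.inl i))) * Polynomial.X ^ (i : ℕ))
    (hS : S = ∑ i : Fin (e + 1),
      Polynomial.C (MvPolynomial.X (Sum.inr (Sum.inr i))) * Polynomial.X ^ (i : ℕ)) :
    ∀ c : ℤ, MvPolynomial.C c ∣ res (e + 1) m (Polynomial.X * Q - S) P → IsUnit c := by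
  intro c hc
  let f : Fin (m + 1) ⊕ Fin (e + 1) ⊕ Fin (e + 1) → ℤ :=
    Sum.elim (Pi.single 0 1) (Sum.elim (Pi.single (Fin.last e) 1) 0)
  have hP1 : P.map (MvPolynomial.eval f) = 1 := by
    simp only [hP, Polynomial.map_sum, Polynomial.map_mul, Polynomial.map_C, Polynomial.map_pow,
      Polynomial.map_X, MvPolynomial.eval_X, f, Sum.elim_inl, sum_C_single_mul_X_pow,
      Fin.val_zero, pow_zero, map_one, mul_one]
  have hXQS : (X * Q - S).map (MvPolynomial.eval f) = X ^ (e + 1) := by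
    simp only [hQ, hS, Polynomial.map_sub, Polynomial.map_sum, Polynomial.map_mul,
      Polynomial.map_C, Polynomial.map_pow, Polynomial.map_X, MvPolynomial.eval_X, f,
      Sum.elim_inr, Sum.elim_inl, Pi.zero_apply, sum_C_single_mul_X_pow, Fin.val_last, map_one,
      one_mul, map_zero, zero_mul, Finset.sum_const_zero, sub_zero, pow_succ']
  refine MvPolynomial.isUnit_of_C_dvd_of_isUnit_eval f hc ?_
  rw [res_map, hXQS, hP1]
  exact isUnit_res_X_pow_one ℤ (e + 1) m

/-- The resultant `Res(T·Q − S, P)` of the generic polynomials `P` (degree `m ≥ 1`)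
and `Q`, `S` (degree `e`) is a primitive polynomial over `ℤ`: the only integers
dividing it (equivalently, dividing all of its coefficients) are `±1`. -/
theorem resultant_XQ_sub_S_primitive (m e : ℕ) (hm : 1 ≤ m)
    (P Q S : Polynomial (MvPolynomial (Fin (m + 1) ⊕ Fin (e + 1) ⊕ Fin (e + 1)) ℤ))
    (hP : P = ∑ k : Fin (m + 1),
      Polynomial.C (MvPolynomial.X (Sum.inl k)) * Polynomial.X ^ (k : ℕ))
    (hQ : Q = ∑ i : Fin (e + 1),
      Polynomial.C (MvPolynomial.X (Sum.inr (Sum.inl i))) * Polynomial.X ^ (i : ℕ))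
    (hS : S = ∑ i : Fin (e + 1),
      Polynomial.C (MvPolynomial.X (Sum.inr (Sum.inr i))) * Polynomial.X ^ (i : ℕ)) :
    ∀ c : ℤ, MvPolynomial.C c ∣ res (e + 1) m (Polynomial.X * Q - S) P → IsUnit c :=
  resultant_XQ_sub_S_primitive_general m e P Q S hP hQ hS
end
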